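/- arXiv:2307.04920 — 9 statements merged into one kernel-verified Lean document; each statement's English description precedes it below -/
import Mathlib

section
/- Let X ~ Binomial(n, p) with 0 ≤ p < 1. Then E[X/(2+n-X)] = p · ((n+1)(1-p) + p^(n+1) - 1) / ((n+1)(1-p)^2). -/
open Finset

lemma binom_sum_one (p : ℝ) (m : ℕ) :
    ∑ k ∈ Finset.range (m + 1), (m.choose k : ℝ) * p ^ k * (1 - p) ^ (m - k) = 1 := by
  have h := add_pow p (1 - p) m
  have hpq : p + (1 - p) = 1 := by ring
  rw [hpq, one_pow] at h
  conv_rhs => rw [h]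
  exact Finset.sum_congr rfl (fun k _ => by ring)

/-- Expectation of `X/(2+n-X)` for `X ~ Binomial(n,p)` with `0 ≤ p < 1`. -/
theorem binomial_expectation_div_two_add
    (n : ℕ) (p : ℝ) (hp0 : 0 ≤ p) (hp1 : p < 1) :
    ∑ k ∈ Finset.range (n + 1),
        (n.choose k : ℝ) * p ^ k * (1 - p) ^ (n - k) * ((k : ℝ) / (2 + (n : ℝ) - (k : ℝ)))
      = p * ((n + 1 : ℝ) * (1 - p) + p ^ (n + 1) - 1) / ((n + 1 : ℝ) * (1 - p) ^ 2) := by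
  have hq : (1 : ℝ) - p ≠ 0 := by linarith
  have hn1 : ((n : ℝ) + 1) ≠ 0 := by positivity
  -- termwise rewriting
  have hterm : ∀ k ∈ Finset.range (n + 1),
      (n.choose k : ℝ) * p ^ k * (1 - p) ^ (n - k) * ((k : ℝ) / (2 + (n : ℝ) - (k : ℝ)))
      = (((n : ℝ) + 2) / ((n : ℝ) + 1)) * (((n+1).choose k : ℝ) * p ^ k * (1 - p) ^ (n - k))
        - (1 / ((n : ℝ) + 1)) * (((n+2).choose k : ℝ) * p ^ k * (1 - p) ^ (n - k))
        - (n.choose k : ℝ) * p ^ k * (1 - p) ^ (n - k) := by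
    intro k hk
    rw [Finset.mem_range] at hk
    have hkn : k ≤ n := Nat.lt_succ_iff.mp hk
    have hkr : (k : ℝ) ≤ (n : ℝ) := by exact_mod_cast hkn
    have hden : (2 + (n : ℝ) - (k : ℝ)) ≠ 0 := by linarith
    have h1 : (n.choose k : ℝ) * ((n : ℝ) + 1) = ((n+1).choose k : ℝ) * ((n : ℝ) + 1 - k) := by
      have h := Nat.choose_mul_succ_eq n k
      have hc := congrArg (fun x : ℕ => (x : ℝ)) h
      push_cast [Nat.cast_sub (by omega : k ≤ n + 1)] at hc
      linarith
    have h2 : ((n+1).choose k : ℝ) * ((n : ℝ) + 2) = ((n+2).choose k : ℝ) * ((n : ℝ) + 2 - k) := by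
      have h := Nat.choose_mul_succ_eq (n+1) k
      have hc := congrArg (fun x : ℕ => (x : ℝ)) h
      push_cast [Nat.cast_sub (by omega : k ≤ n + 1 + 1)] at hc
      push_cast at hc ⊢
      linarith
    have hkey : (n.choose k : ℝ) * k * ((n : ℝ) + 1)
        = ((n : ℝ) + 2) * ((n+1).choose k : ℝ) * ((n : ℝ) + 2 - k)
          - ((n+2).choose k : ℝ) * ((n : ℝ) + 2 - k)
          - (n.choose k : ℝ) * ((n : ℝ) + 1) * ((n : ℝ) + 2 - k) := by
      linear_combination ((k : ℝ) + ((n : ℝ) + 2 - k)) * h1 - h2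
    have hscal : (n.choose k : ℝ) * ((k : ℝ) / (2 + (n : ℝ) - (k : ℝ)))
        = (((n : ℝ) + 2) / ((n : ℝ) + 1)) * ((n+1).choose k : ℝ)
          - (1 / ((n : ℝ) + 1)) * ((n+2).choose k : ℝ)
          - (n.choose k : ℝ) := by
      rw [← mul_div_assoc, div_eq_iff hden]
      field_simp
      linear_combination hkey
    linear_combination (p ^ k * (1 - p) ^ (n - k)) * hscal
  rw [Finset.sum_congr rfl hterm]
  rw [Finset.sum_sub_distrib, Finset.sum_sub_distrib, ← Finset.mul_sum, ← Finset.mul_sum]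
  -- evaluate the three sums
  have S0 : ∑ k ∈ Finset.range (n + 1), (n.choose k : ℝ) * p ^ k * (1 - p) ^ (n - k) = 1 :=
    binom_sum_one p n
  have S1 : ∑ k ∈ Finset.range (n + 1), ((n+1).choose k : ℝ) * p ^ k * (1 - p) ^ (n - k)
      = (1 - p ^ (n + 1)) / (1 - p) := by
    have h := binom_sum_one p (n + 1)
    rw [Finset.sum_range_succ] at h
    simp only [Nat.choose_self, Nat.sub_self, pow_zero, Nat.cast_one] at h
    have hstep : ∑ k ∈ Finset.range (n + 1), ((n+1).choose k : ℝ) * p ^ k * (1 - p) ^ (n + 1 - k)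
        = (1 - p) * ∑ k ∈ Finset.range (n + 1), ((n+1).choose k : ℝ) * p ^ k * (1 - p) ^ (n - k) := by
      rw [Finset.mul_sum]
      refine Finset.sum_congr rfl (fun k hk => ?_)
      rw [Finset.mem_range] at hk
      have : n + 1 - k = (n - k) + 1 := by omega
      rw [this, pow_succ]
      ring
    rw [hstep] at h
    rw [eq_div_iff hq]
    linarith
  have S2 : ∑ k ∈ Finset.range (n + 1), ((n+2).choose k : ℝ) * p ^ k * (1 - p) ^ (n - k)
      = (1 - ((n : ℝ) + 2) * p ^ (n + 1) * (1 - p) - p ^ (n + 2)) / (1 - p) ^ 2 := by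
    have h := binom_sum_one p (n + 2)
    rw [Finset.sum_range_succ, Finset.sum_range_succ] at h
    simp only [Nat.choose_self, Nat.sub_self, pow_zero, Nat.cast_one] at h
    have hch : ((n+2).choose (n+1) : ℝ) = (n : ℝ) + 2 := by
      rw [Nat.choose_succ_self_right]
      push_cast
      ring
    rw [hch] at h
    have hstep : ∑ k ∈ Finset.range (n + 1), ((n+2).choose k : ℝ) * p ^ k * (1 - p) ^ (n + 2 - k)
        = (1 - p) ^ 2 * ∑ k ∈ Finset.range (n + 1), ((n+2).choose k : ℝ) * p ^ k * (1 - p) ^ (n - k) := by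
      rw [Finset.mul_sum]
      refine Finset.sum_congr rfl (fun k hk => ?_)
      rw [Finset.mem_range] at hk
      have : n + 2 - k = (n - k) + 2 := by omega
      rw [this, pow_add]
      ring
    rw [hstep] at h
    have hq2 : ((1 : ℝ) - p) ^ 2 ≠ 0 := pow_ne_zero 2 hq
    rw [eq_div_iff hq2]
    have hsub : n + 2 - (n + 1) = 1 := by omega
    rw [hsub] at h
    nlinarith [h]
  rw [S0, S1, S2]
  field_simp
  ring
end

section
/- For every integer n ≥ 3 and every p ∈ [0,1), the function f(p) = (1/(1-p)) · ((1-p^n)/(1-p) - n·p) is strictly decreasing on [0,1). -/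
/-!
Multiplying out by `(1 - p)²`, the function equals `n - ∑_{k < n-1} (n-1-k) pᵏ` away from
`p = 1`. The polynomial subtracted has nonnegative coefficients, and the coefficient `n - 2` of
`p` is positive once `n ≥ 3`, so it is strictly increasing on `[0, ∞)`.
-/

open Finset

theorem one_sub_sq_mul_sum_range_sub_mul_pow (m : ℕ) (x : ℝ) :
    (1 - x) ^ 2 * ∑ k ∈ range m, ((m : ℝ) - k) * x ^ k = m - (m + 1) * x + x ^ (m + 1) := by
  induction m with
  | zero => simp
  | succ m ih =>
    have hgeom : (1 - x) * ∑ k ∈ range (m + 1), x ^ k = 1 - x ^ (m + 1) := by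
      linear_combination -geom_sum_mul x (m + 1)
    have hsplit : ∑ k ∈ range (m + 1), (((m : ℝ) + 1) - k) * x ^ k
        = ∑ k ∈ range m, ((m : ℝ) - k) * x ^ k + ∑ k ∈ range (m + 1), x ^ k := by
      have hlast : ∑ k ∈ range (m + 1), ((m : ℝ) - k) * x ^ k
          = ∑ k ∈ range m, ((m : ℝ) - k) * x ^ k := by
        simp [sum_range_succ]
      rw [← hlast, ← sum_add_distrib]
      exact sum_congr rfl fun _ _ => by ring
    push_cast
    rw [hsplit]
    linear_combination ih + (1 - x) * hgeom

theorem strictMonoOn_sum_mul_pow {s : Finset ℕ} {c : ℕ → ℝ} (hc : ∀ k ∈ s, 0 ≤ c k)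
    {j : ℕ} (hjs : j ∈ s) (hj : j ≠ 0) (hcj : 0 < c j) :
    StrictMonoOn (fun x : ℝ => ∑ k ∈ s, c k * x ^ k) (Set.Ici 0) := by
  intro a ha b _ hab
  refine sum_lt_sum (fun k hk => ?_) ⟨j, hjs, ?_⟩
  · exact mul_le_mul_of_nonneg_left (pow_le_pow_left₀ ha hab.le k) (hc k hk)
  · exact mul_lt_mul_of_pos_left (pow_lt_pow_left₀ hab ha hj) hcj

theorem one_div_one_sub_mul_sub_eq (m : ℕ) {p : ℝ} (hp : p ≠ 1) :
    1 / (1 - p) * ((1 - p ^ (m + 1)) / (1 - p) - ((m + 1 : ℕ) : ℝ) * p)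
      = (m + 1) - ∑ k ∈ range m, ((m : ℝ) - k) * p ^ k := by
  have hp' : 1 - p ≠ 0 := sub_ne_zero.mpr hp.symm
  field_simp
  push_cast
  linear_combination one_sub_sq_mul_sum_range_sub_mul_pow m p

/-- For every integer `n ≥ 3`, `f(p) = (1/(1-p)) * ((1-p^n)/(1-p) - n p)`
is strictly decreasing on `[0,1)`. -/
theorem foraging_f_strictAnti (n : ℕ) (hn : 3 ≤ n) :
    StrictAntiOn
      (fun p : ℝ => (1 / (1 - p)) * ((1 - p ^ n) / (1 - p) - (n : ℝ) * p))
      (Set.Ico (0 : ℝ) 1) := by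
  obtain ⟨m, rfl⟩ : ∃ m, n = m + 1 := ⟨n - 1, by omega⟩
  have hmono : StrictMonoOn (fun x : ℝ => ∑ k ∈ range m, ((m : ℝ) - k) * x ^ k) (Set.Ici 0) :=
    strictMonoOn_sum_mul_pow
      (fun k hk => sub_nonneg.mpr (by exact_mod_cast (mem_range.mp hk).le))
      (mem_range.mpr (by omega)) one_ne_zero (sub_pos.mpr (by exact_mod_cast (by omega : 1 < m)))
  intro a ha b hb hab
  simp only [one_div_one_sub_mul_sub_eq m ha.2.ne, one_div_one_sub_mul_sub_eq m hb.2.ne]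
  linarith [hmono ha.1 hb.1 hab]
end

section
/- For every integer n ≥ 3 and every p ∈ [0,1), n(1-p)(1+p^(n-1)) > 2(1-p^n). -/
lemma foraging_aux (p : ℝ) (hp0 : 0 ≤ p) (hp1 : p ≤ 1) :
    ∀ n : ℕ, ((n : ℝ) + 1) * p ^ n * (1 - p) ≤ 1 - p ^ (n + 1) := by
  intro n
  induction n with
  | zero => norm_num
  | succ k ih =>
    have hk : (0:ℝ) ≤ p ^ k := pow_nonneg hp0 k
    have e1 : p ^ (k + 1) = p ^ k * p := pow_succ p k
    have e2 : p ^ (k + 2) = p ^ k * p * p := by rw [pow_succ, pow_succ]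
    push_cast
    rw [e1]
    rw [show k + 1 + 1 = k + 2 from rfl, e2]
    rw [e1] at ih
    nlinarith [mul_nonneg (mul_nonneg (by positivity : (0:ℝ) ≤ (k:ℝ)+1) hk)
      (sq_nonneg (1 - p)), ih]

/-- For every integer `n ≥ 3` and `p ∈ [0,1)`, `n(1-p)(1+p^(n-1)) > 2(1-p^n)`. -/
theorem foraging_key_inequality (n : ℕ) (hn : 3 ≤ n) (p : ℝ)
    (hp : p ∈ Set.Ico (0 : ℝ) 1) :
    (n : ℝ) * (1 - p) * (1 + p ^ (n - 1)) > 2 * (1 - p ^ n) := by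
  obtain ⟨hp0, hp1⟩ := hp
  induction n, hn using Nat.le_induction with
  | base =>
    norm_num
    nlinarith [pow_pos (by linarith : (0:ℝ) < 1 - p) 3, sq_nonneg (1-p)]
  | succ n hn ih =>
    obtain ⟨m, rfl⟩ : ∃ m, n = m + 1 := ⟨n - 1, by omega⟩
    simp only [Nat.add_sub_cancel] at ih ⊢
    have haux := foraging_aux p hp0 hp1.le m
    have hm : (0:ℝ) ≤ p ^ m := pow_nonneg hp0 m
    have h1p : (0:ℝ) < 1 - p := by linarith
    have e1 : p ^ (m + 1) = p ^ m * p := pow_succ p m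
    have e2 : p ^ (m + 2) = p ^ m * p * p := by rw [pow_succ, pow_succ]
    rw [e1] at haux
    rw [e1] at ih
    rw [e1, e2]
    push_cast at ih haux ⊢
    -- s := (1 - p^{m+1}) - (m+2) p^{m+1} (1-p) ... key: goal = ih + (1-p)*s'
    nlinarith [mul_nonneg h1p.le (sub_nonneg.mpr haux), ih]
end

section
/- In the Foraging game with n players, finder's share s ∈ [0,1], and parameter γ ≥ 0, the payoff of a producer when all other n-1 players are producers independently with probability p < 1 is π(1,p) = s(1+γ) + (1-s)(1+γ)·(1-p^n)/(n(1-p)). -/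
open Finset

lemma sumA (m : ℕ) (p : ℝ) :
    ∑ j ∈ Finset.range (m + 1), (m.choose j : ℝ) * (1 - p) ^ j * p ^ (m - j) = 1 := by
  have h : ∑ j ∈ Finset.range (m + 1), (m.choose j : ℝ) * (1 - p) ^ j * p ^ (m - j)
      = ∑ j ∈ Finset.range (m + 1), (1 - p) ^ j * p ^ (m - j) * (m.choose j : ℝ) :=
    Finset.sum_congr rfl fun j _ => by ring
  rw [h, ← add_pow]
  norm_num

lemma sumB (n : ℕ) (hn : 1 ≤ n) (p : ℝ) :
    ∑ j ∈ Finset.range n, (n.choose (j + 1) : ℝ) * (1 - p) ^ (j + 1) * p ^ (n - 1 - j)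
      = 1 - p ^ n := by
  have h : ∑ j ∈ Finset.range (n + 1), (1 - p) ^ j * p ^ (n - j) * (n.choose j : ℝ)
      = 1 := by rw [← add_pow]; norm_num
  rw [Finset.sum_range_succ'] at h
  simp only [Nat.choose_zero_right, pow_zero, Nat.sub_zero, Nat.cast_one, one_mul, mul_one] at h
  have h2 : ∀ j ∈ Finset.range n, (n.choose (j + 1) : ℝ) * (1 - p) ^ (j + 1) * p ^ (n - 1 - j)
      = (1 - p) ^ (j + 1) * p ^ (n - (j + 1)) * (n.choose (j + 1) : ℝ) := by
    intro j hj
    have : n - 1 - j = n - (j + 1) := by omega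
    rw [this]; ring
  rw [Finset.sum_congr rfl h2]
  linarith [h]

/-- Producer's expected payoff in the Foraging game: the number of scroungers among
the other `n-1` players is `Binomial(n-1, 1-p)`, and the payoff given `j` scroungers
is `s(1+γ) + (1-s)(1+γ)/(1+j)`. -/
theorem foraging_producer_payoff
    (n : ℕ) (hn : 2 ≤ n) (s γ p : ℝ) (hs : s ∈ Set.Icc (0 : ℝ) 1)
    (hγ : 0 ≤ γ) (hp0 : 0 ≤ p) (hp1 : p < 1) :
    ∑ j ∈ Finset.range n,
        ((n - 1).choose j : ℝ) * (1 - p) ^ j * p ^ (n - 1 - j) *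
          (s * (1 + γ) + (1 - s) * (1 + γ) / (1 + (j : ℝ)))
      = s * (1 + γ) + (1 - s) * (1 + γ) * (1 - p ^ n) / ((n : ℝ) * (1 - p)) := by
  have hq : (1 : ℝ) - p ≠ 0 := by linarith
  have hn0 : (n : ℝ) ≠ 0 := by positivity
  have hm : n - 1 + 1 = n := by omega
  have split : ∀ j ∈ Finset.range n,
      ((n - 1).choose j : ℝ) * (1 - p) ^ j * p ^ (n - 1 - j) *
          (s * (1 + γ) + (1 - s) * (1 + γ) / (1 + (j : ℝ)))
      = s * (1 + γ) * (((n - 1).choose j : ℝ) * (1 - p) ^ j * p ^ (n - 1 - j))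
        + (1 - s) * (1 + γ) *
          (((n - 1).choose j : ℝ) * (1 - p) ^ j * p ^ (n - 1 - j) / (1 + (j : ℝ))) := by
    intro j _; ring
  rw [Finset.sum_congr rfl split, Finset.sum_add_distrib, ← Finset.mul_sum, ← Finset.mul_sum]
  have hA : ∑ j ∈ Finset.range n, ((n - 1).choose j : ℝ) * (1 - p) ^ j * p ^ (n - 1 - j) = 1 := by
    have := sumA (n - 1) p
    rwa [hm] at this
  have key : ∀ j : ℕ, (n : ℝ) * ((n - 1).choose j : ℝ) = ((j : ℝ) + 1) * (n.choose (j + 1) : ℝ) := by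
    intro j
    have h2 : n * (n - 1).choose j = n.choose (j + 1) * (j + 1) := by
      have h := Nat.add_one_mul_choose_eq (n - 1) j
      simpa [Nat.succ_eq_add_one, hm] using h
    have := congrArg (Nat.cast : ℕ → ℝ) h2
    push_cast at this
    linarith
  have hB : ∑ j ∈ Finset.range n,
      ((n - 1).choose j : ℝ) * (1 - p) ^ j * p ^ (n - 1 - j) / (1 + (j : ℝ))
      = (1 - p ^ n) / ((n : ℝ) * (1 - p)) := by
    rw [eq_div_iff (mul_ne_zero hn0 hq), Finset.sum_mul]
    have h3 : ∀ j ∈ Finset.range n,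
        ((n - 1).choose j : ℝ) * (1 - p) ^ j * p ^ (n - 1 - j) / (1 + (j : ℝ)) * ((n : ℝ) * (1 - p))
        = (n.choose (j + 1) : ℝ) * (1 - p) ^ (j + 1) * p ^ (n - 1 - j) := by
      intro j _
      have h1j : (1 : ℝ) + (j : ℝ) ≠ 0 := by positivity
      rw [div_mul_eq_mul_div, div_eq_iff h1j]
      linear_combination ((1 - p) ^ (j + 1) * p ^ (n - 1 - j)) * key j
    rw [Finset.sum_congr rfl h3]
    exact sumB n (by omega) p
  rw [hA, hB]
  ring
end

section
/- In the Foraging game with n players, the payoff of a scrounger when each of the other n-1 players is independently a producer with probability p < 1 is π(0,p) = γ + (1-s)(1+γ)·p·(n(1-p) + p^n - 1)/(n(1-p)²). -/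
open Finset


lemma nat_key (M i : ℕ) :
    (M + 1) * ((i + 1) * M.choose (i + 1)) = (M - i) * ((M + 1 - i) * (M + 1).choose i) := by
  have h1 : M.choose (i+1) * (i+1) = M.choose i * (M - i) := Nat.choose_succ_right_eq M i
  have h2 : (M + 1) * M.choose i = (M+1).choose (i+1) * (i+1) := by
    simpa using Nat.add_one_mul_choose_eq M i
  have h3 : (M+1).choose (i+1) * (i+1) = (M+1).choose i * (M + 1 - i) :=
    Nat.choose_succ_right_eq (M+1) i
  calc (M + 1) * ((i + 1) * M.choose (i + 1)) = (M.choose (i+1) * (i+1)) * (M+1) := by ring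
    _ = (M.choose i * (M - i)) * (M+1) := by rw [h1]
    _ = ((M + 1) * M.choose i) * (M - i) := by ring
    _ = ((M+1).choose (i+1) * (i+1)) * (M - i) := by rw [h2]
    _ = ((M+1).choose i * (M + 1 - i)) * (M - i) := by rw [h3]
    _ = (M - i) * ((M + 1 - i) * (M + 1).choose i) := by ring

lemma binom_sum (m : ℕ) (p q : ℝ) (h : p + q = 1) :
    ∑ j ∈ range (m+1), (m.choose j : ℝ) * p ^ j * q ^ (m - j) = 1 := by
  have := add_pow p q m
  rw [h, one_pow] at this
  rw [this]
  exact Finset.sum_congr rfl (fun j _ => by ring)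

lemma binom_mean (m : ℕ) (p q : ℝ) (h : p + q = 1) :
    ∑ i ∈ range (m+1), (i : ℝ) * (m.choose i : ℝ) * p ^ i * q ^ (m - i) = m * p := by
  rw [Finset.sum_range_succ']
  simp only [Nat.cast_zero, zero_mul]
  have key : ∀ i ∈ range m, ((i+1 : ℕ) : ℝ) * (m.choose (i+1) : ℝ) * p ^ (i+1) * q ^ (m - (i+1))
      = (m : ℝ) * p * (((m-1).choose i : ℝ) * p ^ i * q ^ (m - 1 - i)) := by
    intro i hi
    rw [mem_range] at hi
    obtain ⟨l, rfl⟩ : ∃ l, m = l + 1 := ⟨m - 1, by omega⟩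
    have h2 : Nat.succ l * l.choose i = (l+1).choose (i+1) * (i+1) := Nat.add_one_mul_choose_eq l i
    have hc : ((l+1 : ℕ) : ℝ) * (l.choose i : ℝ) = ((l+1).choose (i+1) : ℝ) * ((i+1 : ℕ) : ℝ) := by
      exact_mod_cast congrArg (Nat.cast (R := ℝ)) h2
    have he : l + 1 - (i + 1) = l - i := by omega
    have he2 : l + 1 - 1 - i = l - i := by omega
    rw [he, he2]
    push_cast at hc ⊢
    rw [pow_succ]
    linear_combination (- p ^ i * p * q ^ (l - i)) * hc
  rw [Finset.sum_congr rfl key, ← Finset.mul_sum]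
  rcases m with _ | l
  · simp
  · simp only [Nat.add_sub_cancel]
    rw [binom_sum l p q h]
    ring

lemma scrounge_sum (l : ℕ) (p q : ℝ) (h : p + q = 1) (hq : q ≠ 0) :
    ∑ j ∈ range (l+2), (((l+1).choose j : ℝ) * p ^ j * q ^ (l+1-j)) * ((j:ℝ)/((l:ℝ)+3-(j:ℝ)))
      = p * ((((l:ℝ)+2) * q + p^(l+2) - 1) / ((((l:ℝ)+2) * q^2))) := by
  set f : ℕ → ℝ := fun i => ((l:ℝ)+1-(i:ℝ)) * ((l+2).choose i : ℝ) * p ^ i * q ^ (l+2-i) with hf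
  have hT3 : ∑ i ∈ range (l+3), f i = ((l:ℝ)+1) - ((l:ℝ)+2)*p := by
    have h1 := binom_sum (l+2) p q h
    have h2 := binom_mean (l+2) p q h
    have hc : ∀ i ∈ range (l+3), f i
        = ((l:ℝ)+1) * (((l+2).choose i : ℝ) * p ^ i * q ^ (l+2-i))
          - (i:ℝ) * ((l+2).choose i : ℝ) * p ^ i * q ^ (l+2-i) := by
      intro i _; simp only [hf]; ring
    rw [Finset.sum_congr rfl hc, Finset.sum_sub_distrib, ← Finset.mul_sum]
    rw [show l+3 = (l+2)+1 from rfl, h1, h2]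
    push_cast; ring
  have hT : ∑ i ∈ range (l+1), f i = ((l:ℝ)+1) - ((l:ℝ)+2)*p + p^(l+2) := by
    have e3 : ∑ i ∈ range (l+3), f i = (∑ i ∈ range (l+1), f i) + f (l+1) + f (l+2) := by
      rw [show l+3 = (l+2)+1 from rfl, Finset.sum_range_succ, Finset.sum_range_succ]
    have hf1 : f (l+1) = 0 := by
      simp only [hf]; push_cast; ring
    have hf2 : f (l+2) = -p^(l+2) := by
      simp only [hf, Nat.choose_self, Nat.sub_self, pow_zero, Nat.cast_one]
      push_cast; ring
    rw [e3, hf1, hf2] at hT3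
    linarith [hT3]
  -- peel off j = 0
  rw [Finset.sum_range_succ']
  simp only [Nat.cast_zero, zero_div, mul_zero, add_zero]
  have key : ∀ i ∈ range (l+1),
      (((l+1).choose (i+1) : ℝ) * p ^ (i+1) * q ^ (l+1-(i+1))) * (((i+1:ℕ):ℝ)/((l:ℝ)+3-((i+1:ℕ):ℝ)))
        = (p/(q^2*((l:ℝ)+2))) * f i := by
    intro i hi
    rw [mem_range] at hi
    have hi' : i ≤ l := by omega
    have hnk := nat_key (l+1) i
    have hcast : ((l:ℝ)+2) * (((i:ℝ)+1) * ((l+1).choose (i+1) : ℝ))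
        = ((l:ℝ)+1-(i:ℝ)) * (((l:ℝ)+2-(i:ℝ)) * ((l+2).choose i : ℝ)) := by
      have c1 : ((l+1-i : ℕ) : ℝ) = (l:ℝ)+1-(i:ℝ) := by
        rw [Nat.cast_sub (by omega)]; push_cast; ring
      have c2 : ((l+2-i : ℕ) : ℝ) = (l:ℝ)+2-(i:ℝ) := by
        rw [Nat.cast_sub (by omega)]; push_cast; ring
      have := congrArg (Nat.cast (R := ℝ)) hnk
      push_cast [Nat.cast_sub (show i ≤ l+1 by omega), Nat.cast_sub (show i ≤ l+2 by omega)] at this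
      linarith [this]
    have he : l+1-(i+1) = l-i := by omega
    have he2 : l+2-i = (l-i)+2 := by omega
    have hd : (l:ℝ)+3-((i:ℝ)+1) = (l:ℝ)+2-(i:ℝ) := by ring
    have hdne : (l:ℝ)+2-(i:ℝ) ≠ 0 := by
      have : (i:ℝ) ≤ l := by exact_mod_cast hi'
      nlinarith
    have hl2 : ((l:ℝ)+2) ≠ 0 := by positivity
    have hmain : ((l+1).choose (i+1) : ℝ) * ((i:ℝ)+1) / ((l:ℝ)+2-(i:ℝ))
        = ((l:ℝ)+1-(i:ℝ)) * ((l+2).choose i : ℝ) / ((l:ℝ)+2) := by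
      rw [div_eq_div_iff hdne hl2]
      linear_combination hcast
    simp only [hf, he, he2]
    push_cast
    rw [hd]
    calc (((l+1).choose (i+1) : ℝ) * p ^ (i+1) * q ^ (l-i)) * (((i:ℝ)+1)/((l:ℝ)+2-(i:ℝ)))
        = (((l+1).choose (i+1) : ℝ) * ((i:ℝ)+1) / ((l:ℝ)+2-(i:ℝ))) * (p ^ (i+1) * q ^ (l-i)) := by
          ring
      _ = (((l:ℝ)+1-(i:ℝ)) * ((l+2).choose i : ℝ) / ((l:ℝ)+2)) * (p ^ (i+1) * q ^ (l-i)) := by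
          rw [hmain]
      _ = (p/(q^2*((l:ℝ)+2))) * (((l:ℝ)+1-(i:ℝ)) * ((l+2).choose i : ℝ) * p ^ i * q ^ ((l-i)+2)) := by
          field_simp
          ring
  rw [Finset.sum_congr rfl key, ← Finset.mul_sum, hT]
  have hl2 : ((l:ℝ)+2) ≠ 0 := by positivity
  have hq' : q = 1 - p := by linarith
  subst hq'
  field_simp
  ring

/-- Scrounger's expected payoff in the Foraging game: the number of producers among
the other `n-1` players is `Binomial(n-1, p)`, and the payoff given `j` producers
is `γ + j(1-s)(1+γ)/(1+n-j)`. -/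
theorem foraging_scrounger_payoff
    (n : ℕ) (hn : 2 ≤ n) (s γ p : ℝ) (hs : s ∈ Set.Icc (0 : ℝ) 1)
    (hγ : 0 ≤ γ) (hp0 : 0 ≤ p) (hp1 : p < 1) :
    ∑ j ∈ Finset.range n,
        ((n - 1).choose j : ℝ) * p ^ j * (1 - p) ^ (n - 1 - j) *
          (γ + (j : ℝ) * (1 - s) * (1 + γ) / (1 + (n : ℝ) - (j : ℝ)))
      = γ + (1 - s) * (1 + γ) * p * ((n : ℝ) * (1 - p) + p ^ n - 1) /
          ((n : ℝ) * (1 - p) ^ 2) := by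
  obtain ⟨l, rfl⟩ : ∃ l, n = l + 2 := ⟨n - 2, by omega⟩
  set q : ℝ := 1 - p with hqdef
  have h : p + q = 1 := by rw [hqdef]; ring
  have hq : q ≠ 0 := by rw [hqdef]; intro hc; linarith
  have hsub1 : l + 2 - 1 = l + 1 := by omega
  have split : ∀ j ∈ range (l+2),
      ((l + 2 - 1).choose j : ℝ) * p ^ j * (1 - p) ^ (l + 2 - 1 - j) *
          (γ + (j : ℝ) * (1 - s) * (1 + γ) / (1 + ((l+2 : ℕ) : ℝ) - (j : ℝ)))
        = γ * (((l+1).choose j : ℝ) * p ^ j * q ^ (l+1-j))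
          + (1-s)*(1+γ) * ((((l+1).choose j : ℝ) * p ^ j * q ^ (l+1-j)) * ((j:ℝ)/((l:ℝ)+3-(j:ℝ)))) := by
    intro j _
    rw [hsub1, hqdef]
    push_cast
    ring
  rw [Finset.sum_congr rfl split, Finset.sum_add_distrib, ← Finset.mul_sum, ← Finset.mul_sum,
    binom_sum (l+1) p q h, scrounge_sum l p q h hq]
  rw [hqdef]
  push_cast
  ring
end

section
/- In the 2-player Foraging game with finder's share s ∈ [0,1) and γ_s = (1+s)/(1-s): for γ < γ_s, 'producer' strictly dominates (π(1,p) > π(0,p) for all p ∈ [0,1]), and for γ > γ_s, 'scrounger' strictly dominates (π(1,p) < π(0,p) for all p). Consequently, the equilibrium payoff is 1+γ for γ < γ_s and γ for γ > γ_s, and for every ε ∈ (0,1/2), the equilibrium payoff at γ_s - ε strictly exceeds that at γ_s + ε. -/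
/-- Producer's expected payoff in the 2-player Foraging game, as the bilinear
extension: with `k` producers, a producer gets `s(1+γ) + (1-s)(1+γ)/(3-k)`. -/
noncomputable def foragingPayoffP (s γ p : ℝ) : ℝ :=
  p * (s * (1 + γ) + (1 - s) * (1 + γ)) +
    (1 - p) * (s * (1 + γ) + (1 - s) * (1 + γ) / 2)

/-- Scrounger's expected payoff in the 2-player Foraging game: with `k` producers,
a scrounger gets `γ + k(1-s)(1+γ)/(3-k)`. -/
noncomputable def foragingPayoffS (s γ p : ℝ) : ℝ :=
  p * (γ + (1 - s) * (1 + γ) / 2) + (1 - p) * γ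

/-- Equilibrium payoff of the 2-player Foraging game: `1+γ` when producer dominates
(`γ < γ_s`), and `γ` when scrounger dominates (`γ > γ_s`). -/
noncomputable def foragingEqPayoff (s γ : ℝ) : ℝ :=
  if γ < (1 + s) / (1 - s) then 1 + γ else γ

/-- 2-player Foraging game: below `γ_s = (1+s)/(1-s)` producer strictly dominates,
above it scrounger strictly dominates, and the equilibrium payoff drops across `γ_s`. -/
theorem foraging_two_players (s : ℝ) (hs0 : 0 ≤ s) (hs1 : s < 1) :
    (∀ γ : ℝ, 0 ≤ γ → γ < (1 + s) / (1 - s) →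
      ∀ p ∈ Set.Icc (0 : ℝ) 1, foragingPayoffP s γ p > foragingPayoffS s γ p) ∧
    (∀ γ : ℝ, γ > (1 + s) / (1 - s) →
      ∀ p ∈ Set.Icc (0 : ℝ) 1, foragingPayoffP s γ p < foragingPayoffS s γ p) ∧
    (∀ γ : ℝ, 0 ≤ γ → γ < (1 + s) / (1 - s) → foragingEqPayoff s γ = 1 + γ) ∧
    (∀ γ : ℝ, γ > (1 + s) / (1 - s) → foragingEqPayoff s γ = γ) ∧
    (∀ ε : ℝ, 0 < ε → ε < 1 / 2 →
      foragingEqPayoff s ((1 + s) / (1 - s) - ε) >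
        foragingEqPayoff s ((1 + s) / (1 - s) + ε)) := by
  have h1s : (0:ℝ) < 1 - s := by linarith
  refine ⟨?_, ?_, ?_, ?_, ?_⟩
  · intro γ hγ0 hγ p hp
    have h : γ * (1 - s) < 1 + s := by
      have := (lt_div_iff₀ h1s).mp hγ
      linarith
    simp only [foragingPayoffP, foragingPayoffS, gt_iff_lt]
    nlinarith [hp.1, hp.2]
  · intro γ hγ p hp
    have h : 1 + s < γ * (1 - s) := (div_lt_iff₀ h1s).mp hγ
    simp only [foragingPayoffP, foragingPayoffS]
    nlinarith [hp.1, hp.2]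
  · intro γ _ hγ
    simp [foragingEqPayoff, hγ]
  · intro γ hγ
    simp [foragingEqPayoff, not_lt.mpr (le_of_lt hγ)]
  · intro ε hε hε2
    have hlt : (1 + s) / (1 - s) - ε < (1 + s) / (1 - s) := by linarith
    have hge : ¬ ((1 + s) / (1 - s) + ε < (1 + s) / (1 - s)) := by linarith
    simp only [foragingEqPayoff, if_pos hlt, if_neg hge]
    linarith
end

section
/- Consider the 2-player Company game with linear utility φ(x) = x: payoffs are R = pγ - c, S = pγ(s + a - sa) - c, T = pγ(1 - s + sa), P = paγ, with parameters c ≥ 0, s ∈ [1/2,1], p, a ∈ [0,1], a < 1, p > 0, s > 0. Let γ₀ = c/(ps(1-a)). Then for γ < γ₀, scrounger dominates (T > R and P > S), and for γ > γ₀, producer dominates (R > T and S > P). Moreover the resulting equilibrium payoff, equal to paγ for γ < γ₀ and pγ - c for γ > γ₀, is nondecreasing across γ₀: paγ₀ ≤ pγ₀ - c. -/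
/-- 2-player Company game with linear utility `φ(x) = x`: with
`R = pγ - c`, `S = pγ(s+a-sa) - c`, `T = pγ(1-s+sa)`, `P = paγ` and
`γ₀ = c/(ps(1-a))`, scrounger dominates for `γ < γ₀`, producer dominates for
`γ > γ₀`, and the equilibrium payoff does not decrease across `γ₀`. -/
theorem company_linear_no_reverse_correlation
    (c s p a : ℝ) (hc : 0 ≤ c) (hs0 : 1 / 2 ≤ s) (hs1 : s ≤ 1) (hs : 0 < s)
    (hp0 : 0 < p) (hp1 : p ≤ 1) (ha0 : 0 ≤ a) (ha1 : a < 1)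
    (γ₀ : ℝ) (hγ₀ : γ₀ = c / (p * s * (1 - a))) :
    (∀ γ : ℝ, 0 ≤ γ → γ < γ₀ →
      p * γ * (1 - s + s * a) > p * γ - c ∧
      p * a * γ > p * γ * (s + a - s * a) - c) ∧
    (∀ γ : ℝ, γ > γ₀ →
      p * γ - c > p * γ * (1 - s + s * a) ∧
      p * γ * (s + a - s * a) - c > p * a * γ) ∧
    p * a * γ₀ ≤ p * γ₀ - c := by
  have h1a : (0:ℝ) < 1 - a := by linarith
  have hden : 0 < p * s * (1 - a) := by positivity
  have hkey : p * s * (1 - a) * γ₀ = c := by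
    rw [hγ₀]; field_simp
  refine ⟨fun γ hγ0 hγ => ?_, fun γ hγ => ?_, ?_⟩
  · have h : p * s * (1 - a) * γ < c := by
      calc p * s * (1 - a) * γ < p * s * (1 - a) * γ₀ := by
            exact mul_lt_mul_of_pos_left hγ hden
        _ = c := hkey
    constructor <;> nlinarith
  · have h : c < p * s * (1 - a) * γ := by
      calc c = p * s * (1 - a) * γ₀ := hkey.symm
        _ < p * s * (1 - a) * γ := mul_lt_mul_of_pos_left hγ hden
    constructor <;> nlinarith
  · have hγ₀0 : 0 ≤ γ₀ := by rw [hγ₀]; positivity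
    nlinarith [mul_nonneg (mul_nonneg hp0.le (sub_nonneg.2 ha1.le)) hγ₀0]
end

section
/- In the 2-player Company game with φ(x) = 1 - e^(-2x), p = a = 1/2, parameters γ > 0, s ∈ (0,1), c ∈ ℝ: with R = (1/4)(3 - e^(-2γ) - e^(-2sγ) - e^(-2(1-s)γ)) - c, S = (1/4)(3 - e^(-(1+s)γ) - e^(-2sγ) - e^(-(1-s)γ)) - c, T = (1/4)(3 - e^(-(2-s)γ) - e^(-sγ) - e^(-2(1-s)γ)), P = (1/4)(3 - e^(-γ) - e^(-sγ) - e^(-(1-s)γ)), one has (T - P) - (R - S) = (e^(-2γ)/4)·(e^γ + 1 - e^(sγ) - e^((1-s)γ)) > 0; in particular S - P > R - T. -/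
open Real

/-- 2-player Company game with `φ(x) = 1 - e^(-2x)`, `p = a = 1/2`:
`(T - P) - (R - S) = (e^(-2γ)/4)(e^γ + 1 - e^(sγ) - e^((1-s)γ)) > 0`,
so in particular `S - P > R - T`. -/
theorem company_chicken_structure (γ s c R S T P : ℝ)
    (hγ : 0 < γ) (hs0 : 0 < s) (hs1 : s < 1)
    (hR : R = (1 / 4) * (3 - exp (-2 * γ) - exp (-2 * s * γ) - exp (-2 * (1 - s) * γ)) - c)
    (hS : S = (1 / 4) * (3 - exp (-(1 + s) * γ) - exp (-2 * s * γ) - exp (-(1 - s) * γ)) - c)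
    (hT : T = (1 / 4) * (3 - exp (-(2 - s) * γ) - exp (-s * γ) - exp (-2 * (1 - s) * γ)))
    (hP : P = (1 / 4) * (3 - exp (-γ) - exp (-s * γ) - exp (-(1 - s) * γ))) :
    (T - P) - (R - S) =
      (exp (-2 * γ) / 4) * (exp γ + 1 - exp (s * γ) - exp ((1 - s) * γ)) ∧
    (T - P) - (R - S) > 0 ∧
    S - P > R - T := by
  have h1 : exp (-(2 - s) * γ) = exp (-2 * γ) * exp (s * γ) := by
    rw [← exp_add]; ring_nf
  have h2 : exp (-γ) = exp (-2 * γ) * exp γ := by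
    rw [← exp_add]; ring_nf
  have h3 : exp (-(1 + s) * γ) = exp (-2 * γ) * exp ((1 - s) * γ) := by
    rw [← exp_add]; ring_nf
  have heq : (T - P) - (R - S) =
      (exp (-2 * γ) / 4) * (exp γ + 1 - exp (s * γ) - exp ((1 - s) * γ)) := by
    rw [hR, hS, hT, hP, h1, h2, h3]; ring
  have hmul : exp (s * γ) * exp ((1 - s) * γ) = exp γ := by
    rw [← exp_add]; ring_nf
  have ha : 1 < exp (s * γ) := by
    have : exp 0 < exp (s * γ) := exp_lt_exp.mpr (by positivity)
    simpa using this
  have hb : 1 < exp ((1 - s) * γ) := by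
    have : exp 0 < exp ((1 - s) * γ) := exp_lt_exp.mpr (mul_pos (by linarith) hγ)
    simpa using this
  have hpos : exp γ + 1 - exp (s * γ) - exp ((1 - s) * γ) > 0 := by
    nlinarith [mul_pos (sub_pos.mpr ha) (sub_pos.mpr hb)]
  have he : 0 < exp (-2 * γ) := exp_pos _
  have hgt : (T - P) - (R - S) > 0 := by
    rw [heq]; positivity
  exact ⟨heq, hgt, by linarith⟩
end

section
/- In the 2-player Company game with φ(x) = 1 - e^(-2x), p = a = 1/2, and R, S, T, P as in the previous context (assuming T > R > S > P), the chicken-game equilibrium payoff satisfies (ST - RP)/(S + T - R - P) = 1 - c·e^(sγ)·(e^(sγ) + 1)/(e^(sγ) - 1), for γ > 0 and s ∈ (0,1). -/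
set_option maxHeartbeats 1000000


open Real

/-- 2-player Company game with `φ(x) = 1 - e^(-2x)`, `p = a = 1/2`, assuming the
chicken structure `T > R > S > P`: the equilibrium payoff satisfies
`(ST - RP)/(S + T - R - P) = 1 - c e^(sγ) (e^(sγ)+1)/(e^(sγ)-1)`. -/
theorem company_equilibrium_payoff (γ s c R S T P : ℝ)
    (hγ : 0 < γ) (hs0 : 0 < s) (hs1 : s < 1)
    (hR : R = (1 / 4) * (3 - exp (-2 * γ) - exp (-2 * s * γ) - exp (-2 * (1 - s) * γ)) - c)
    (hS : S = (1 / 4) * (3 - exp (-(1 + s) * γ) - exp (-2 * s * γ) - exp (-(1 - s) * γ)) - c)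
    (hT : T = (1 / 4) * (3 - exp (-(2 - s) * γ) - exp (-s * γ) - exp (-2 * (1 - s) * γ)))
    (hP : P = (1 / 4) * (3 - exp (-γ) - exp (-s * γ) - exp (-(1 - s) * γ)))
    (h1 : T > R) (h2 : R > S) (h3 : S > P) :
    (S * T - R * P) / (S + T - R - P) =
      1 - c * exp (s * γ) * (exp (s * γ) + 1) / (exp (s * γ) - 1) := by
  set u := exp (-(s * γ)) with hu
  set a := exp (-γ) with ha
  have hu0 : 0 < u := exp_pos _
  have ha0 : 0 < a := exp_pos _
  have hsγ : 0 < s * γ := mul_pos hs0 hγ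
  have hu1 : u < 1 := by
    rw [hu, exp_lt_one_iff]; linarith
  have hau : a < u := by
    rw [ha, hu, exp_lt_exp]; nlinarith
  have hE : exp (s * γ) = u⁻¹ := by rw [hu, ← exp_neg, neg_neg]
  have e1 : exp (-2 * γ) = a * a := by rw [ha, ← exp_add]; ring_nf
  have e2 : exp (-2 * s * γ) = u * u := by rw [hu, ← exp_add]; ring_nf
  have e3 : exp (-2 * (1 - s) * γ) = a * a / (u * u) := by
    rw [ha, hu, ← exp_add, ← exp_add, ← exp_sub]; congr 1; ring
  have e4 : exp (-(1 + s) * γ) = a * u := by rw [ha, hu, ← exp_add]; ring_nf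
  have e5 : exp (-(1 - s) * γ) = a / u := by
    rw [ha, hu, ← exp_sub]; congr 1; ring
  have e6 : exp (-(2 - s) * γ) = a * a / u := by
    rw [ha, hu, ← exp_add, ← exp_sub]; congr 1; ring
  have e7 : exp (-s * γ) = u := by rw [hu]; ring_nf
  have e8 : exp (-γ) = a := ha.symm
  rw [hE] at *
  simp only [e1, e2, e3, e4, e5, e6, e7, e8] at hR hS hT hP
  have hune : u ≠ 0 := ne_of_gt hu0
  have hane : a ≠ 0 := ne_of_gt ha0
  have hDpos : 0 < S + T - R - P := by
    have key : S + T - R - P = a / u * ((1 - u) * (u - a)) / 4 := by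
      rw [hR, hS, hT, hP]
      field_simp
      ring
    rw [key]
    apply div_pos _ (by norm_num : (0:ℝ) < 4)
    exact mul_pos (div_pos ha0 hu0) (mul_pos (by linarith) (by linarith))
  have hDne : S + T - R - P ≠ 0 := ne_of_gt hDpos
  rw [div_eq_iff hDne]
  have hu1ne : u⁻¹ - 1 ≠ 0 := by
    have : (1:ℝ) < u⁻¹ := (one_lt_inv₀ hu0).mpr hu1
    linarith
  have h1u : (1:ℝ) - u ≠ 0 := by intro h; nlinarith
  have hRHS : 1 - c * u⁻¹ * (u⁻¹ + 1) / (u⁻¹ - 1) = 1 - c * (1 + u) / (u * (1 - u)) := by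
    rw [show u⁻¹ - 1 = (1 - u) / u by field_simp]
    field_simp
  rw [hRHS, hR, hS, hT, hP]
  field_simp
  ring
end
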